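/- Let G be a connected simple C4-free graph with minimum degree at least 2, equipped with the unweighted normalized Laplacian, satisfying CD(0,∞) and containing a triangle. Then every edge incident to any vertex of G lies in a triangle. -/
import Mathlib


open Finset

variable {V : Type*}

/-- Unweighted non-normalized graph Laplacian. -/
noncomputable def nnLap (G : SimpleGraph V) [G.LocallyFinite] (f : V → ℝ) (x : V) : ℝ :=
  ∑ y ∈ G.neighborFinset x, (f y - f x)

/-- Unweighted normalized graph Laplacian. -/
noncomputable def nLap (G : SimpleGraph V) [G.LocallyFinite] (f : V → ℝ) (x : V) : ℝ :=
  (∑ y ∈ G.neighborFinset x, (f y - f x)) / (G.degree x : ℝ)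

/-- Bakry–Émery carré du champ operator Γ for a Laplacian `L`. -/
noncomputable def gam (L : (V → ℝ) → V → ℝ) (f g : V → ℝ) (x : V) : ℝ :=
  (L (f * g) x - f x * L g x - g x * L f x) / 2

/-- Iterated carré du champ operator Γ₂ for a Laplacian `L`. -/
noncomputable def gam2 (L : (V → ℝ) → V → ℝ) (f g : V → ℝ) (x : V) : ℝ :=
  (L (gam L f g) x - gam L f (L g) x - gam L (L f) g x) / 2

/-- `G` has no 4-cycle subgraph, equivalently any two distinct vertices have at
most one common neighbor. -/
def C4Free (G : SimpleGraph V) : Prop :=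
  ∀ ⦃u v a b : V⦄, u ≠ v → G.Adj u a → G.Adj a v → G.Adj u b → G.Adj b v → a = b

lemma gam_comm (L : (V → ℝ) → V → ℝ) (f g : V → ℝ) : gam L f g = gam L g f := by
  funext x; unfold gam; rw [mul_comm f g]; ring

lemma gam2_self (L : (V → ℝ) → V → ℝ) (f : V → ℝ) (x : V) :
    gam2 L f f x = (L (gam L f f) x - 2 * gam L f (L f) x) / 2 := by
  unfold gam2; rw [gam_comm L (L f) f]; ring

variable (G : SimpleGraph V) [G.LocallyFinite]

lemma nLap_eq_sum (h : V → ℝ) (x : V) :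
    nLap G h x = ((∑ t ∈ G.neighborFinset x, h t) - (G.degree x : ℝ) * h x) /
      (G.degree x : ℝ) := by
  unfold nLap
  congr 1
  rw [Finset.sum_sub_distrib, Finset.sum_const, nsmul_eq_mul,
    SimpleGraph.card_neighborFinset_eq_degree]

lemma gam_nLap (f g : V → ℝ) (x : V) :
    gam (nLap G) f g x
      = (∑ y ∈ G.neighborFinset x, (f y - f x) * (g y - g x)) / (2 * (G.degree x : ℝ)) := by
  unfold gam nLap
  have key : (∑ y ∈ G.neighborFinset x, ((f * g) y - (f * g) x))
      - f x * (∑ y ∈ G.neighborFinset x, (g y - g x))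
      - g x * (∑ y ∈ G.neighborFinset x, (f y - f x))
      = ∑ y ∈ G.neighborFinset x, (f y - f x) * (g y - g x) := by
    rw [Finset.mul_sum, Finset.mul_sum, ← Finset.sum_sub_distrib, ← Finset.sum_sub_distrib]
    refine Finset.sum_congr rfl fun y _ => ?_
    simp only [Pi.mul_apply]; ring
  rcases eq_or_ne ((G.degree x : ℝ)) 0 with hd | hd
  · rw [hd]; simp
  · rw [← mul_div_assoc, ← mul_div_assoc, div_sub_div_same, div_sub_div_same, key, div_div,
      mul_comm ((G.degree x : ℝ)) 2]

lemma sum_nbr_pair {x a b : V} (hne : a ≠ b) (ha : G.Adj x a) (hb : G.Adj x b)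
    (h : V → ℝ) (h0 : ∀ t, G.Adj x t → t ≠ a → t ≠ b → h t = 0) :
    ∑ t ∈ G.neighborFinset x, h t = h a + h b := by
  classical
  rw [← Finset.sum_subset (s₁ := ({a, b} : Finset V))
      (by intro t ht; simp only [Finset.mem_insert, Finset.mem_singleton] at ht
          rcases ht with rfl | rfl <;> simp [SimpleGraph.mem_neighborFinset, ha, hb])
      (by intro t ht hnt
          simp only [Finset.mem_insert, Finset.mem_singleton, not_or] at hnt
          exact h0 t ((SimpleGraph.mem_neighborFinset G x t).1 ht) hnt.1 hnt.2)]
  rw [Finset.sum_pair hne]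

lemma sum_nbr_triple {x a b c : V} (hab : a ≠ b) (hac : a ≠ c) (hbc : b ≠ c)
    (ha : G.Adj x a) (hb : G.Adj x b) (hc : G.Adj x c)
    (h : V → ℝ) (h0 : ∀ t, G.Adj x t → t ≠ a → t ≠ b → t ≠ c → h t = 0) :
    ∑ t ∈ G.neighborFinset x, h t = h a + h b + h c := by
  classical
  rw [← Finset.sum_subset (s₁ := ({a, b, c} : Finset V))
      (by intro t ht; simp only [Finset.mem_insert, Finset.mem_singleton] at ht
          rcases ht with rfl | rfl | rfl <;> simp [SimpleGraph.mem_neighborFinset, ha, hb, hc])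
      (by intro t ht hnt
          simp only [Finset.mem_insert, Finset.mem_singleton, not_or] at hnt
          exact h0 t ((SimpleGraph.mem_neighborFinset G x t).1 ht) hnt.1 hnt.2.1 hnt.2.2)]
  rw [Finset.sum_insert (by simp [hab, hac]), Finset.sum_pair hbc, add_assoc]

lemma sum_nbr_base {x w : V} (hw : G.Adj x w) (h : V → ℝ) (base : ℝ)
    (hb : ∀ t, G.Adj x t → t ≠ w → h t = base) :
    ∑ t ∈ G.neighborFinset x, h t = h w + ((G.degree x : ℝ) - 1) * base := by
  classical
  have hwm : w ∈ G.neighborFinset x := (SimpleGraph.mem_neighborFinset G x w).2 hw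
  rw [← Finset.add_sum_erase _ _ hwm]
  congr 1
  rw [Finset.sum_congr rfl (fun t ht => hb t
      ((SimpleGraph.mem_neighborFinset G x t).1 (Finset.mem_of_mem_erase ht))
      (Finset.ne_of_mem_erase ht)),
    Finset.sum_const, Finset.card_erase_of_mem hwm, nsmul_eq_mul,
    SimpleGraph.card_neighborFinset_eq_degree]
  have h1 : 1 ≤ G.degree x := by
    rw [← SimpleGraph.card_neighborFinset_eq_degree]
    exact Finset.card_pos.2 ⟨w, hwm⟩
  rw [Nat.cast_sub h1, Nat.cast_one]

/-- Negative curvature at a triangle-free vertex with a degree-`≥3` neighbor. -/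
lemma KL {G : SimpleGraph V} [G.LocallyFinite] (hC4 : C4Free G)
    {z x₁ x₂ : V} (h1 : G.Adj z x₁) (h2 : G.Adj z x₂) (h12 : x₁ ≠ x₂)
    (hfree : ∀ p q, G.Adj z p → G.Adj z q → ¬ G.Adj p q)
    (hd1 : 3 ≤ G.degree x₁) (hd2 : 2 ≤ G.degree x₂)
    (hCD : ∀ f : V → ℝ, 0 ≤ gam2 (nLap G) f f z) : False := by
  classical
  have hD1 : (3 : ℝ) ≤ (G.degree x₁ : ℝ) := by exact_mod_cast hd1
  have hD2 : (2 : ℝ) ≤ (G.degree x₂ : ℝ) := by exact_mod_cast hd2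
  have hdz : (0 : ℝ) < (G.degree z : ℝ) := by
    have h : 0 < G.degree z := by
      rw [← SimpleGraph.card_neighborFinset_eq_degree]
      exact Finset.card_pos.2 ⟨x₁, (SimpleGraph.mem_neighborFinset G z x₁).2 h1⟩
    exact_mod_cast h
  have hdz0 : ((G.degree z : ℝ)) ≠ 0 := ne_of_gt hdz
  have hdx10 : ((G.degree x₁ : ℝ)) ≠ 0 := by linarith
  have hdx20 : ((G.degree x₂ : ℝ)) ≠ 0 := by linarith
  have hzx1 : z ≠ x₁ := h1.ne
  have hzx2 : z ≠ x₂ := h2.ne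
  have hnadj : ¬ G.Adj x₁ x₂ := hfree x₁ x₂ h1 h2
  set f : V → ℝ := fun t =>
    if t = x₁ then 1 else if t = x₂ then -1
    else if G.Adj x₁ t ∧ t ≠ z then 2
    else if G.Adj x₂ t ∧ t ≠ z then -2 else 0 with hf
  have hfx1 : f x₁ = 1 := by rw [hf]; simp
  have hfx2 : f x₂ = -1 := by rw [hf]; simp [h12.symm]
  have hfz : f z = 0 := by rw [hf]; simp [hzx1, hzx2]
  have hfS1 : ∀ s, G.Adj x₁ s → s ≠ z → f s = 2 := by
    intro s hs hsz
    have hs1 : s ≠ x₁ := hs.ne'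
    have hs2 : s ≠ x₂ := by rintro rfl; exact hnadj hs
    rw [hf]; simp [hs1, hs2, hs, hsz]
  have hfS2 : ∀ s, G.Adj x₂ s → s ≠ z → f s = -2 := by
    intro s hs hsz
    have hs1 : s ≠ x₁ := by rintro rfl; exact hnadj hs.symm
    have hs2 : s ≠ x₂ := hs.ne'
    have hs3 : ¬ G.Adj x₁ s := by
      intro h
      exact hsz (hC4 h12 h1.symm h2 h hs.symm).symm
    rw [hf]; simp [hs1, hs2, hs3, hs, hsz]
  have hfN : ∀ t, G.Adj z t → t ≠ x₁ → t ≠ x₂ → f t = 0 := by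
    intro t ht ht1 ht2
    have hn1 : ¬ (G.Adj x₁ t ∧ t ≠ z) := fun h => hfree x₁ t h1 ht h.1
    have hn2 : ¬ (G.Adj x₂ t ∧ t ≠ z) := fun h => hfree x₂ t h2 ht h.1
    rw [hf]; simp only [if_neg ht1, if_neg ht2, if_neg hn1, if_neg hn2]
  have hfNN : ∀ t, G.Adj z t → t ≠ x₁ → t ≠ x₂ → ∀ s, G.Adj t s → f s = 0 := by
    intro t ht ht1 ht2 s hts
    have hs1 : s ≠ x₁ := fun he => hfree t x₁ ht h1 (he ▸ hts)
    have hs2 : s ≠ x₂ := fun he => hfree t x₂ ht h2 (he ▸ hts)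
    have hs3 : ¬ (G.Adj x₁ s ∧ s ≠ z) := by
      rintro ⟨h, hsz⟩
      exact ht1 (hC4 (Ne.symm hsz) h1 h ht hts).symm
    have hs4 : ¬ (G.Adj x₂ s ∧ s ≠ z) := by
      rintro ⟨h, hsz⟩
      exact ht2 (hC4 (Ne.symm hsz) h2 h ht hts).symm
    rw [hf]; simp only [if_neg hs1, if_neg hs2, if_neg hs3, if_neg hs4]
  -- computations
  have c1 : nLap G f z = 0 := by
    rw [nLap_eq_sum G f z, sum_nbr_pair G h12 h1 h2 f hfN, hfx1, hfx2, hfz]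
    norm_num
  have c2 : gam (nLap G) f f z = 1 / (G.degree z : ℝ) := by
    rw [gam_nLap G f f z, sum_nbr_pair G h12 h1 h2 _
      (fun t ht ht1 ht2 => by
        show (f t - f z) * (f t - f z) = 0
        rw [hfN t ht ht1 ht2, hfz]; ring),
      hfx1, hfx2, hfz]
    rw [div_eq_div_iff (by positivity) hdz0]
    ring
  have c3 : gam (nLap G) f f x₁ = 1 / 2 := by
    rw [gam_nLap G f f x₁, sum_nbr_base G h1.symm _ 1
      (fun t ht htz => by
        show (f t - f x₁) * (f t - f x₁) = 1
        rw [hfS1 t ht htz, hfx1]; norm_num),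
      hfz, hfx1]
    rw [div_eq_div_iff (by positivity) (two_ne_zero)]
    ring
  have c4 : gam (nLap G) f f x₂ = 1 / 2 := by
    rw [gam_nLap G f f x₂, sum_nbr_base G h2.symm _ 1
      (fun t ht htz => by
        show (f t - f x₂) * (f t - f x₂) = 1
        rw [hfS2 t ht htz, hfx2]; norm_num),
      hfz, hfx2]
    rw [div_eq_div_iff (by positivity) (two_ne_zero)]
    ring
  have c5 : ∀ t, G.Adj z t → t ≠ x₁ → t ≠ x₂ → gam (nLap G) f f t = 0 := by
    intro t ht ht1 ht2
    rw [gam_nLap G f f t, Finset.sum_eq_zero (fun s hs => by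
      show (f s - f t) * (f s - f t) = 0
      rw [hfNN t ht ht1 ht2 s ((SimpleGraph.mem_neighborFinset G t s).1 hs),
        hfN t ht ht1 ht2]; ring)]
    exact zero_div _
  have c6 : nLap G (gam (nLap G) f f) z = 0 := by
    rw [nLap_eq_sum G _ z, sum_nbr_pair G h12 h1 h2 _ c5, c2, c3, c4,
      mul_one_div, div_self hdz0]
    norm_num
  have c7 : nLap G f x₁ = ((G.degree x₁ : ℝ) - 2) / (G.degree x₁ : ℝ) := by
    rw [nLap_eq_sum G f x₁, sum_nbr_base G h1.symm f 2 hfS1, hfz, hfx1]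
    congr 1; ring
  have c8 : nLap G f x₂ = (2 - (G.degree x₂ : ℝ)) / (G.degree x₂ : ℝ) := by
    rw [nLap_eq_sum G f x₂, sum_nbr_base G h2.symm f (-2) hfS2, hfz, hfx2]
    congr 1; ring
  have c9 : gam (nLap G) f (nLap G f) z
      = (((G.degree x₁:ℝ) - 2)/(G.degree x₁:ℝ) + ((G.degree x₂:ℝ) - 2)/(G.degree x₂:ℝ))
        / (2 * (G.degree z : ℝ)) := by
    rw [gam_nLap G f (nLap G f) z, sum_nbr_pair G h12 h1 h2 _
      (fun t ht ht1 ht2 => by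
        show (f t - f z) * (nLap G f t - nLap G f z) = 0
        rw [hfN t ht ht1 ht2, hfz]; ring),
      hfx1, hfx2, hfz, c1, c7, c8]
    congr 1; ring
  have hval : gam2 (nLap G) f f z
      = -((((G.degree x₁:ℝ) - 2)/(G.degree x₁:ℝ) + ((G.degree x₂:ℝ) - 2)/(G.degree x₂:ℝ))
        / (2 * (G.degree z : ℝ))) := by
    rw [gam2_self, c6, c9]; ring
  have hp1 : 0 < ((G.degree x₁:ℝ) - 2)/(G.degree x₁:ℝ) := by
    apply div_pos <;> linarith
  have hp2 : 0 ≤ ((G.degree x₂:ℝ) - 2)/(G.degree x₂:ℝ) := by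
    apply div_nonneg <;> linarith
  have hpos : 0 < (((G.degree x₁:ℝ) - 2)/(G.degree x₁:ℝ)
      + ((G.degree x₂:ℝ) - 2)/(G.degree x₂:ℝ)) / (2 * (G.degree z : ℝ)) := by
    apply div_pos (by linarith) (by linarith)
  have h0 := hCD f
  rw [hval] at h0
  linarith

/-- Negative curvature at a triangle vertex `u` with an edge `uv` in no
triangle, where `v` has degree at least 3. -/
lemma KL2 {G : SimpleGraph V} [G.LocallyFinite] (hC4 : C4Free G)
    {u v y w : V} (huv : G.Adj u v) (huy : G.Adj u y) (huw : G.Adj u w) (hyw : G.Adj y w)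
    (hno : ∀ t, G.Adj u t → ¬ G.Adj v t)
    (hdv : 3 ≤ G.degree v)
    (hCD : ∀ f : V → ℝ, 0 ≤ gam2 (nLap G) f f u) : False := by
  classical
  have hvy : v ≠ y := fun he => hno w huw (by rw [he]; exact hyw)
  have hvw : v ≠ w := fun he => hno y huy (by rw [he]; exact hyw.symm)
  have hAvy : ¬ G.Adj v y := hno y huy
  have hAvw : ¬ G.Adj v w := hno w huw
  -- degree bounds
  have hcard : ({v, y, w} : Finset V).card = 3 := by
    rw [Finset.card_insert_of_notMem (by simp [hvy, hvw]), Finset.card_pair hyw.ne]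
  have hsub : ({v, y, w} : Finset V) ⊆ G.neighborFinset u := by
    intro t ht
    simp only [Finset.mem_insert, Finset.mem_singleton] at ht
    rcases ht with rfl | rfl | rfl <;>
      simp [SimpleGraph.mem_neighborFinset, huv, huy, huw]
  have hdu : 3 ≤ G.degree u := by
    rw [← SimpleGraph.card_neighborFinset_eq_degree, ← hcard]
    exact Finset.card_le_card hsub
  have hD : (3 : ℝ) ≤ (G.degree u : ℝ) := by exact_mod_cast hdu
  have hVd : (3 : ℝ) ≤ (G.degree v : ℝ) := by exact_mod_cast hdv
  have hdegpos : ∀ a b : V, G.Adj a b → (0:ℝ) < (G.degree a : ℝ) := by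
    intro a b hab
    have h : 0 < G.degree a := by
      rw [← SimpleGraph.card_neighborFinset_eq_degree]
      exact Finset.card_pos.2 ⟨b, (SimpleGraph.mem_neighborFinset G a b).2 hab⟩
    exact_mod_cast h
  have hY : (0:ℝ) < (G.degree y : ℝ) := hdegpos y u huy.symm
  have hW : (0:ℝ) < (G.degree w : ℝ) := hdegpos w u huw.symm
  have hD0 : ((G.degree u : ℝ)) ≠ 0 := by linarith
  have hV0 : ((G.degree v : ℝ)) ≠ 0 := by linarith
  have hY0 : ((G.degree y : ℝ)) ≠ 0 := ne_of_gt hY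
  have hW0 : ((G.degree w : ℝ)) ≠ 0 := ne_of_gt hW
  -- the test function
  set f : V → ℝ := fun t =>
    if t = v then 1 else if t = y then -(4⁻¹) else if t = w then -(4⁻¹)
    else if G.Adj v t ∧ t ≠ u then 2 else 0 with hf
  have hfv : f v = 1 := by rw [hf]; simp
  have hfy : f y = -(4⁻¹) := by rw [hf]; simp [hvy.symm]
  have hfw : f w = -(4⁻¹) := by rw [hf]; simp [hvw.symm, hyw.ne']
  have hfu : f u = 0 := by
    rw [hf]; simp [huv.ne, huy.ne, huw.ne]
  have hfS : ∀ s, G.Adj v s → s ≠ u → f s = 2 := by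
    intro s hs hsu
    have hs1 : s ≠ v := hs.ne'
    have hs2 : s ≠ y := fun he => hAvy (he ▸ hs)
    have hs3 : s ≠ w := fun he => hAvw (he ▸ hs)
    rw [hf]; simp only [if_neg hs1, if_neg hs2, if_neg hs3]
    simp [hs, hsu]
  have hfN : ∀ t, G.Adj u t → t ≠ v → t ≠ y → t ≠ w → f t = 0 := by
    intro t ht ht1 ht2 ht3
    have hn : ¬ (G.Adj v t ∧ t ≠ u) := fun hh => hno t ht hh.1
    rw [hf]; simp only [if_neg ht1, if_neg ht2, if_neg ht3, if_neg hn]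
  have hfNN : ∀ t, G.Adj u t → t ≠ v → t ≠ y → t ≠ w → ∀ s, G.Adj t s → f s = 0 := by
    intro t ht ht1 ht2 ht3 s hts
    have hs1 : s ≠ v := fun he => hno t ht (he ▸ hts).symm
    have hs2 : s ≠ y := fun he =>
      ht3 (hC4 huy.ne huw hyw.symm ht (he ▸ hts)).symm
    have hs3 : s ≠ w := fun he =>
      ht2 (hC4 huw.ne huy hyw ht (he ▸ hts)).symm
    have hs4 : ¬ (G.Adj v s ∧ s ≠ u) := by
      rintro ⟨hvs, hsu⟩
      exact ht1 (hC4 (Ne.symm hsu) huv hvs ht hts).symm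
    rw [hf]; simp only [if_neg hs1, if_neg hs2, if_neg hs3, if_neg hs4]
  have hfNy : ∀ t, G.Adj y t → t ≠ w → f t = 0 := by
    intro t hyt htw
    have ht1 : t ≠ v := fun he => hAvy (he ▸ hyt).symm
    have ht2 : t ≠ y := hyt.ne'
    have hn : ¬ (G.Adj v t ∧ t ≠ u) := by
      rintro ⟨hvt, htu⟩
      exact htu (hC4 hvy.symm hyt hvt.symm huy.symm huv)
    rw [hf]; simp only [if_neg ht1, if_neg ht2, if_neg htw, if_neg hn]
  have hfNw : ∀ t, G.Adj w t → t ≠ y → f t = 0 := by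
    intro t hwt hty
    have ht1 : t ≠ v := fun he => hAvw (he ▸ hwt).symm
    have ht3 : t ≠ w := hwt.ne'
    have hn : ¬ (G.Adj v t ∧ t ≠ u) := by
      rintro ⟨hvt, htu⟩
      exact htu (hC4 hvw.symm hwt hvt.symm huw.symm huv)
    rw [hf]; simp only [if_neg ht1, if_neg hty, if_neg ht3, if_neg hn]
  -- computations
  have cLu : nLap G f u = (1/2) / (G.degree u : ℝ) := by
    rw [nLap_eq_sum G f u, sum_nbr_triple G hvy hvw hyw.ne huv huy huw f hfN,
      hfv, hfy, hfw, hfu]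
    congr 1; norm_num
  have cGu : gam (nLap G) f f u = (9/8) / (2 * (G.degree u : ℝ)) := by
    rw [gam_nLap G f f u, sum_nbr_triple G hvy hvw hyw.ne huv huy huw _
      (fun t ht ht1 ht2 ht3 => by
        show (f t - f u) * (f t - f u) = 0
        rw [hfN t ht ht1 ht2 ht3, hfu]; ring),
      hfv, hfy, hfw, hfu]
    congr 1; norm_num
  have cGy : gam (nLap G) f f y
      = (((G.degree y : ℝ) - 1) / 16) / (2 * (G.degree y : ℝ)) := by
    rw [gam_nLap G f f y, sum_nbr_base G hyw _ (1/16)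
      (fun t ht htw => by
        show (f t - f y) * (f t - f y) = 1/16
        rw [hfNy t ht htw, hfy]; norm_num),
      hfw, hfy]
    congr 1; ring
  have cGw : gam (nLap G) f f w
      = (((G.degree w : ℝ) - 1) / 16) / (2 * (G.degree w : ℝ)) := by
    rw [gam_nLap G f f w, sum_nbr_base G hyw.symm _ (1/16)
      (fun t ht hty => by
        show (f t - f w) * (f t - f w) = 1/16
        rw [hfNw t ht hty, hfw]; norm_num),
      hfy, hfw]
    congr 1; ring
  have cGv : gam (nLap G) f f v = 1/2 := by
    rw [gam_nLap G f f v, sum_nbr_base G huv.symm _ 1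
      (fun s hs hsu => by
        show (f s - f v) * (f s - f v) = 1
        rw [hfS s hs hsu, hfv]; norm_num),
      hfu, hfv]
    rw [div_eq_div_iff (by linarith) (two_ne_zero)]
    ring
  have cG0 : ∀ t, G.Adj u t → t ≠ v → t ≠ y → t ≠ w → gam (nLap G) f f t = 0 := by
    intro t ht ht1 ht2 ht3
    rw [gam_nLap G f f t, Finset.sum_eq_zero (fun s hs => by
      show (f s - f t) * (f s - f t) = 0
      rw [hfNN t ht ht1 ht2 ht3 s ((SimpleGraph.mem_neighborFinset G t s).1 hs),
        hfN t ht ht1 ht2 ht3]; ring)]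
    exact zero_div _
  have cLGu : nLap G (gam (nLap G) f f) u
      = ((1/2 + (((G.degree y : ℝ) - 1) / 16) / (2 * (G.degree y : ℝ))
          + (((G.degree w : ℝ) - 1) / 16) / (2 * (G.degree w : ℝ)))
          - (G.degree u : ℝ) * ((9/8) / (2 * (G.degree u : ℝ)))) / (G.degree u : ℝ) := by
    rw [nLap_eq_sum G _ u, sum_nbr_triple G hvy hvw hyw.ne huv huy huw _ cG0,
      cGv, cGy, cGw, cGu]
  have cLy : nLap G f y
      = ((-(4⁻¹) + ((G.degree y : ℝ) - 1) * 0) - (G.degree y : ℝ) * (-(4⁻¹)))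
        / (G.degree y : ℝ) := by
    rw [nLap_eq_sum G f y, sum_nbr_base G hyw f 0 hfNy, hfw, hfy]
  have cLw : nLap G f w
      = ((-(4⁻¹) + ((G.degree w : ℝ) - 1) * 0) - (G.degree w : ℝ) * (-(4⁻¹)))
        / (G.degree w : ℝ) := by
    rw [nLap_eq_sum G f w, sum_nbr_base G hyw.symm f 0 hfNw, hfy, hfw]
  have cLv : nLap G f v
      = ((0 + ((G.degree v : ℝ) - 1) * 2) - (G.degree v : ℝ) * 1) / (G.degree v : ℝ) := by
    rw [nLap_eq_sum G f v, sum_nbr_base G huv.symm f 2 hfS, hfu, hfv]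
  have cGLu : gam (nLap G) f (nLap G f) u
      = ((1 - 0) * (nLap G f v - nLap G f u)
        + (-(4⁻¹) - 0) * (nLap G f y - nLap G f u)
        + (-(4⁻¹) - 0) * (nLap G f w - nLap G f u)) / (2 * (G.degree u : ℝ)) := by
    rw [gam_nLap G f (nLap G f) u, sum_nbr_triple G hvy hvw hyw.ne huv huy huw _
      (fun t ht ht1 ht2 ht3 => by
        show (f t - f u) * (nLap G f t - nLap G f u) = 0
        rw [hfN t ht ht1 ht2 ht3, hfu]; ring),
      hfv, hfy, hfw, hfu]
  have hval : gam2 (nLap G) f f u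
      = (1/(4*(G.degree u : ℝ)) - 7/8 - 3/(32*(G.degree y : ℝ)) - 3/(32*(G.degree w : ℝ))
          + 2/(G.degree v : ℝ)) / (2*(G.degree u : ℝ)) := by
    rw [gam2_self, cLGu, cGLu, cLv, cLy, cLw, cLu]
    field_simp
    ring
  have h1d : 1/(4*(G.degree u : ℝ)) ≤ 1/12 := by
    rw [div_le_div_iff₀ (by linarith) (by norm_num)]; linarith
  have h2v : 2/((G.degree v : ℝ)) ≤ 2/3 := by
    rw [div_le_div_iff₀ (by linarith) (by norm_num)]; linarith
  have h3y : (0:ℝ) ≤ 3/(32*(G.degree y : ℝ)) := by positivity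
  have h3w : (0:ℝ) ≤ 3/(32*(G.degree w : ℝ)) := by positivity
  have hT : (1/(4*(G.degree u : ℝ)) - 7/8 - 3/(32*(G.degree y : ℝ))
      - 3/(32*(G.degree w : ℝ)) + 2/(G.degree v : ℝ)) < 0 := by linarith
  have hneg : gam2 (nLap G) f f u < 0 := by
    rw [hval]
    exact div_neg_of_neg_of_pos hT (by linarith)
  linarith [hCD f]

/-- In a connected `C₄`-free graph with minimum degree at least 2 satisfying
normalized `CD(0,∞)` and containing a triangle, every edge lies in a
triangle. -/
theorem stmt_14 (G : SimpleGraph V) [G.LocallyFinite] (hconn : G.Connected)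
    (hC4 : C4Free G) (hmin : ∀ v : V, 2 ≤ G.degree v)
    (hCD : ∀ (x : V) (f : V → ℝ), 0 ≤ gam2 (nLap G) f f x)
    (htri : ∃ a b c : V, G.Adj a b ∧ G.Adj b c ∧ G.Adj a c) :
    ∀ u v : V, G.Adj u v → ∃ w, G.Adj u w ∧ G.Adj v w := by
  classical
  -- Step 1: triangle-freeness propagates along edges.
  have onestep : ∀ a b : V, (∀ p q, G.Adj a p → G.Adj a q → ¬ G.Adj p q) →
      G.Adj a b → (∀ p q, G.Adj b p → G.Adj b q → ¬ G.Adj p q) := by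
    intro a b hfree hab
    have hdegb : G.degree b ≤ 2 := by
      by_contra hgt
      push_neg at hgt
      have h2' : 1 < (G.neighborFinset a).card := by
        rw [SimpleGraph.card_neighborFinset_eq_degree]
        exact lt_of_lt_of_le one_lt_two (hmin a)
      obtain ⟨c1, hc1, c2, hc2, hcc⟩ := Finset.one_lt_card.mp h2'
      rcases eq_or_ne c1 b with rfl | h
      · exact KL hC4 hab ((SimpleGraph.mem_neighborFinset G a c2).1 hc2) hcc hfree hgt
          (hmin c2) (hCD a)
      · exact KL hC4 hab ((SimpleGraph.mem_neighborFinset G a c1).1 hc1) (Ne.symm h) hfree hgt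
          (hmin c1) (hCD a)
    intro p q hbp hbq hpq
    have hpqne : p ≠ q := hpq.ne
    by_cases hap : a = p
    · exact hfree b q hab (by rw [hap]; exact hpq) hbq
    · by_cases haq : a = q
      · exact hfree b p hab (by rw [haq]; exact hpq.symm) hbp
      · have hsub : ({p, q, a} : Finset V) ⊆ G.neighborFinset b := by
          intro t ht; simp only [Finset.mem_insert, Finset.mem_singleton] at ht
          rcases ht with rfl | rfl | rfl <;>
            simp [SimpleGraph.mem_neighborFinset, hbp, hbq, hab.symm]
        have hpa : p ≠ a := fun he => hap he.symm
        have hqa : q ≠ a := fun he => haq he.symm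
        have hc : ({p, q, a} : Finset V).card = 3 := by
          rw [Finset.card_insert_of_notMem (by simp [hpqne, hpa]),
            Finset.card_pair hqa]
        have h3 : 3 ≤ G.degree b := by
          rw [← SimpleGraph.card_neighborFinset_eq_degree, ← hc]
          exact Finset.card_le_card hsub
        omega
  -- Step 2: every vertex lies in a triangle.
  have intri : ∀ z : V, ∃ p q, G.Adj z p ∧ G.Adj z q ∧ G.Adj p q := by
    by_contra hz
    push_neg at hz
    obtain ⟨z, hzfree⟩ := hz
    have hwalk : ∀ (s t : V) (wk : G.Walk s t),
        (∀ p q, G.Adj s p → G.Adj s q → ¬ G.Adj p q) →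
        (∀ p q, G.Adj t p → G.Adj t q → ¬ G.Adj p q) := by
      intro s t wk
      induction wk with
      | nil => exact id
      | cons h _ ih => exact fun hs => ih (onestep _ _ hs h)
    obtain ⟨a, b, c, h1, h2, h3⟩ := htri
    obtain ⟨wlk⟩ := hconn.preconnected z a
    exact hwalk z a wlk hzfree b c h1 h3 h2
  -- Step 3: conclude.
  intro u v huv
  by_contra hcom
  push_neg at hcom
  obtain ⟨y, w, huy, huw, hyw⟩ := intri u
  obtain ⟨r, s, hvr, hvs, hrs⟩ := intri v
  have hru : r ≠ u := fun he => hcom s (he ▸ hrs) hvs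
  have hsu : s ≠ u := fun he => hcom r (he ▸ hrs.symm) hvr
  have hsub3 : ({u, r, s} : Finset V) ⊆ G.neighborFinset v := by
    intro t ht; simp only [Finset.mem_insert, Finset.mem_singleton] at ht
    rcases ht with rfl | rfl | rfl <;>
      simp [SimpleGraph.mem_neighborFinset, huv.symm, hvr, hvs]
  have hc3 : ({u, r, s} : Finset V).card = 3 := by
    rw [Finset.card_insert_of_notMem (by simp [Ne.symm hru, Ne.symm hsu]),
      Finset.card_pair hrs.ne]
  have hdv : 3 ≤ G.degree v := by
    rw [← SimpleGraph.card_neighborFinset_eq_degree, ← hc3]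
    exact Finset.card_le_card hsub3
  exact KL2 hC4 huv huy huw hyw hcom hdv (hCD u)
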